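/- arXiv:2210.06711 — 3 statements merged into one kernel-verified Lean document; each statement's English description precedes it below -/
import Mathlib

section
/- Fix x ∈ 𝒳 and a predictor f : 𝒳 → ℝ^L. Then MSE(x) < MSE^w(x) if and only if both (1) distortion_f(x) < 1/2, and (2) p(x) ∈ (0, (1 − 2·distortion_f(x)) / (1 − distortion_f(x))²). -/
/-- **When is the unweighted MSE strictly smaller than the weighted MSE?**

Fix `x` and a predictor `f`. With `A = ℓ (ftrue x) (f x) > 0`, `B = ℓ (yadv x) (f x)`,
`distortion x = B / A`, weight `w x = 1 / (1 + p x * (distortion x - 1))` (denominator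
nonzero), and conditional mean-squared errors over the noisy label `y | x`
(`y = yadv x` w.p. `p x`, `y = ftrue x` w.p. `1 - p x`):
`MSE x  = p x * (A - B)² + (1 - p x) * (A - A)²`,
`MSEw x = p x * (A - w x * B)² + (1 - p x) * (A - w x * A)²`.

Conclusion: `MSE x < MSEw x` if and only if
(1) `distortion x < 1/2`, and
(2) `p x ∈ (0, (1 - 2 * distortion x) / (1 - distortion x)²)`. -/
theorem mse_comparison_iff
    {𝒳 : Type*} (L : ℕ) (hL : 0 < L)
    (ftrue yadv : 𝒳 → Fin L) (p : 𝒳 → ℝ)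
    (hp : ∀ x, 0 ≤ p x ∧ p x ≤ 1)
    (f : 𝒳 → Fin L → ℝ) (ℓ : Fin L → (Fin L → ℝ) → ℝ)
    (hℓnonneg : ∀ y v, 0 ≤ ℓ y v)
    (x : 𝒳)
    (hℓpos : 0 < ℓ (ftrue x) (f x))
    (dist : 𝒳 → ℝ)
    (hdist : dist x = ℓ (yadv x) (f x) / ℓ (ftrue x) (f x))
    (w : 𝒳 → ℝ)
    (hden : 1 + p x * (dist x - 1) ≠ 0)
    (hw : w x = 1 / (1 + p x * (dist x - 1)))
    (MSE MSEw : 𝒳 → ℝ)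
    -- the conditional expectations over the noisy label `y | x`
    (hMSE : MSE x =
      p x * (ℓ (ftrue x) (f x) - ℓ (yadv x) (f x)) ^ 2
        + (1 - p x) * (ℓ (ftrue x) (f x) - ℓ (ftrue x) (f x)) ^ 2)
    (hMSEw : MSEw x =
      p x * (ℓ (ftrue x) (f x) - w x * ℓ (yadv x) (f x)) ^ 2
        + (1 - p x) * (ℓ (ftrue x) (f x) - w x * ℓ (ftrue x) (f x)) ^ 2) :
    MSE x < MSEw x ↔
      dist x < 1 / 2 ∧
        (0 < p x ∧ p x < (1 - 2 * dist x) / (1 - dist x) ^ 2) := by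

  obtain ⟨hq0, hq1⟩ := hp x
  have hBA : ℓ (yadv x) (f x) = dist x * ℓ (ftrue x) (f x) := by
    rw [hdist]; field_simp
  have hD2 : (0:ℝ) < (1 + p x * (dist x - 1))^2 := by positivity
  have key : MSEw x = p x * (1 - p x) * (1 - dist x)^2 * (ℓ (ftrue x) (f x))^2
      / (1 + p x * (dist x - 1))^2 := by
    rw [hMSEw, hw, hBA]; field_simp; ring
  have hMSE' : MSE x = p x * (1 - dist x)^2 * (ℓ (ftrue x) (f x))^2 := by
    rw [hMSE, hBA]; ring
  rw [hMSE', key, lt_div_iff₀ hD2]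
  set q := p x with hq
  set d := dist x with hd
  set A := ℓ (ftrue x) (f x) with hA
  clear_value q d A
  clear hMSE hMSEw hdist hBA key hMSE' hw
  constructor
  · intro h
    have hqpos : 0 < q := by
      rcases lt_or_eq_of_le hq0 with h' | h'
      · exact h'
      · exfalso; rw [← h'] at h; simp at h
    have hdne : (1 - d)^2 ≠ 0 := by
      intro h'
      rw [show d = 1 by nlinarith [sq_nonneg (1-d)]] at h
      simp at h
    have hdpos : 0 < (1 - d)^2 := lt_of_le_of_ne (sq_nonneg _) (Ne.symm hdne)
    have ht : 0 < q^2 * (1-d)^2 * A^2 := by positivity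
    have hkey : q * (1 - d)^2 < 1 - 2*d := by
      by_contra hc
      push_neg at hc
      have h2 := mul_nonneg (le_of_lt ht) (by linarith : (0:ℝ) ≤ q*(1-d)^2 - (1-2*d))
      nlinarith [h, h2]
    have hd12 : d < 1/2 := by nlinarith [mul_pos hqpos hdpos]
    refine ⟨hd12, hqpos, ?_⟩
    rw [lt_div_iff₀ hdpos]
    linarith
  · rintro ⟨hd12, hqpos, hqlt⟩
    have hdpos : 0 < (1 - d)^2 := by nlinarith
    rw [lt_div_iff₀ hdpos] at hqlt
    have ht : 0 < q^2 * (1-d)^2 * A^2 := by positivity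
    nlinarith [mul_pos ht (by linarith : (0:ℝ) < (1-2*d) - q*(1-d)^2)]
end

section
/- Let d ≥ 2, let u, v ∈ ℝ^d be nonzero vectors with angle φ = arccos(u·v / (‖u‖₂‖v‖₂)) ∈ [0, π], and let x be distributed uniformly on the unit sphere in ℝ^d. Then Pr[sign(u · x) ≠ sign(v · x)] = φ/π. -/
/-!
Write `D(a, b)` for the set of `x` at which the signs of `⟪a, x⟫` and `⟪b, x⟫` differ. Two
reflections carry any pair of vectors to any other pair with the same norms and inner product, so
by rotation invariance `μ (D(a, b))` depends only on the angle `θ` between `a` and `b`; call it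
`F θ`. Hyperplanes are `μ`-null, by a Fubini argument against Lebesgue measure. If `b` lies
between `a` and `c` in a plane, then `D(a, c)` is the symmetric difference of `D(a, b)` and
`D(b, c)`, which meet only inside a hyperplane. So `F` is additive and nonnegative on `[0, π]`,
with `F π = μ (D(a, -a)) = 1`, which forces `F θ = θ / π`.
-/

open MeasureTheory RealInnerProductSpace

noncomputable def sgn (t : ℝ) : ℝ := if 0 < t then 1 else -1

open Real InnerProductGeometry
open scoped symmDiff

lemma measure_symmDiff_eq_add_of_inter_null {α : Type*} [MeasurableSpace α] {μ : Measure α}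
    {s t : Set α} (ht : MeasurableSet t) (h : μ (s ∩ t) = 0) : μ (s ∆ t) = μ s + μ t := by
  rw [symmDiff_eq_sup_sdiff_inf]
  change μ ((s ∪ t) \ (s ∩ t)) = _
  rw [measure_sdiff_null h, ← measure_union_add_inter s ht, h, add_zero]

lemma div_mul_le_apply_of_add_of_nonneg {g : ℝ → ℝ} {L : ℝ} (hL : 0 < L)
    (hnonneg : ∀ t, 0 ≤ g t)
    (hadd : ∀ a b, 0 ≤ a → 0 ≤ b → a + b ≤ L → g (a + b) = g a + g b)
    {θ : ℝ} (hθ0 : 0 ≤ θ) (hθL : θ ≤ L) : θ / L * g L ≤ g θ := by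
  have hmono : ∀ a, 0 ≤ a → a ≤ θ → g a ≤ g θ := fun a ha haθ => by
    have := hadd a (θ - a) ha (by linarith) (by linarith)
    rw [add_sub_cancel] at this
    linarith [hnonneg (θ - a)]
  have hnsmul : ∀ n : ℕ, ∀ t, 0 ≤ t → n * t ≤ L → g (n * t) = n * g t := by
    intro n t ht hnt
    induction n with
    | zero => simpa using hadd 0 0 le_rfl le_rfl (by simpa using hL.le)
    | succ n ih =>
      have hnt' : n * t ≤ L := le_trans (by gcongr; linarith) hnt
      push_cast at hnt ⊢
      rw [add_one_mul, hadd _ _ (by positivity) ht (by linarith), ih hnt']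
      ring
  have hlim : Filter.Tendsto (fun n : ℕ => θ / L * g L - g L * (1 / (n + 1))) Filter.atTop
      (nhds (θ / L * g L - g L * 0)) :=
    tendsto_const_nhds.sub (tendsto_one_div_add_atTop_nhds_zero_nat.const_mul _)
  rw [mul_zero, sub_zero] at hlim
  refine le_of_tendsto' hlim fun n => ?_
  set m : ℝ := n + 1
  have hm : 0 < m := by positivity
  set k := ⌊θ * m / L⌋₊
  have hk_le : (k : ℝ) ≤ θ * m / L := Nat.floor_le (by positivity)
  have hk_lt : θ * m / L < k + 1 := Nat.lt_floor_add_one _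
  have hkθ : k * (L / m) ≤ θ := by
    rw [le_div_iff₀ hL] at hk_le
    rw [mul_div_assoc', div_le_iff₀ hm]
    linarith
  have hstep : g (L / m) = g L / m := by
    have := hnsmul (n + 1) (L / m) (by positivity) (by push_cast; rw [mul_div_cancel₀ _ hm.ne'])
    rw [Nat.cast_succ, mul_div_cancel₀ _ hm.ne'] at this
    rw [this, mul_div_cancel_left₀ _ hm.ne']
  calc θ / L * g L - g L * (1 / m) = (θ * m / L - 1) * (g L / m) := by field_simp
    _ ≤ k * (g L / m) := by gcongr; exact div_nonneg (hnonneg L) hm.le; linarith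
    _ = g (k * (L / m)) := by rw [hnsmul k _ (by positivity) (hkθ.trans hθL), hstep]
    _ ≤ g θ := hmono _ (by positivity) hkθ

lemma apply_eq_div_mul_of_add_of_nonneg {g : ℝ → ℝ} {L : ℝ} (hL : 0 < L)
    (hnonneg : ∀ t, 0 ≤ g t)
    (hadd : ∀ a b, 0 ≤ a → 0 ≤ b → a + b ≤ L → g (a + b) = g a + g b)
    {θ : ℝ} (hθ0 : 0 ≤ θ) (hθL : θ ≤ L) : g θ = θ / L * g L := by
  have hlower : ∀ t, 0 ≤ t → t ≤ L → t / L * g L ≤ g t := fun t ht htL =>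
    div_mul_le_apply_of_add_of_nonneg hL hnonneg hadd ht htL
  have hsplit := hadd θ (L - θ) hθ0 (by linarith) (by linarith)
  rw [add_sub_cancel] at hsplit
  have hcompl := hlower (L - θ) (by linarith) (by linarith)
  refine le_antisymm ?_ (hlower θ hθ0 hθL)
  rw [sub_div, div_self hL.ne'] at hcompl
  linarith

lemma sgn_eq_sgn_iff {s t : ℝ} : sgn s = sgn t ↔ (0 < s ↔ 0 < t) := by
  unfold sgn
  split_ifs <;> norm_num <;> tauto

lemma measurable_sgn : Measurable sgn :=
  Measurable.ite measurableSet_Ioi measurable_const measurable_const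

section

variable {E : Type*} [NormedAddCommGroup E] [InnerProductSpace ℝ E] {e : Fin 2 → E}

def disagreementSet (a b : E) : Set E := {x | sgn ⟪a, x⟫ ≠ sgn ⟪b, x⟫}

lemma mem_disagreementSet {a b x : E} :
    x ∈ disagreementSet a b ↔ ¬(0 < ⟪a, x⟫ ↔ 0 < ⟪b, x⟫) :=
  sgn_eq_sgn_iff.not

@[simp]
lemma disagreementSet_self (a : E) : disagreementSet a a = ∅ := by
  ext x; simp [disagreementSet]

lemma disagreementSet_neg (a : E) : disagreementSet a (-a) = {x | ⟪a, x⟫ = 0}ᶜ := by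
  ext x
  rw [mem_disagreementSet, inner_neg_left, Set.mem_compl_iff, Set.mem_ofPred_eq, neg_pos]
  constructor
  · rintro h hx; simp [hx] at h
  · intro hx; rcases lt_or_gt_of_ne hx with h | h <;> simp [h, h.not_gt]

lemma disagreementSet_smul {a b : E} {r s : ℝ} (hr : 0 < r) (hs : 0 < s) :
    disagreementSet (r • a) (s • b) = disagreementSet a b := by
  ext x
  simp only [mem_disagreementSet, real_inner_smul_left, mul_pos_iff_of_pos_left hr,
    mul_pos_iff_of_pos_left hs]

lemma preimage_disagreementSet (T : E ≃ₗᵢ[ℝ] E) (a b : E) :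
    T ⁻¹' disagreementSet (T a) (T b) = disagreementSet a b := by
  ext x
  simp only [Set.mem_preimage, mem_disagreementSet, LinearIsometryEquiv.inner_map_map]

lemma disagreementSet_eq_symmDiff (a b c : E) :
    disagreementSet a c = disagreementSet a b ∆ disagreementSet b c := by
  ext x
  simp only [Set.mem_symmDiff, mem_disagreementSet]
  tauto

lemma disagreementSet_inter_subset {a b c : E} {r s t : ℝ} (hr : 0 ≤ r) (hs : 0 ≤ s)
    (ht : 0 < t) (h : s • a + t • c = r • b) :
    disagreementSet a b ∩ disagreementSet b c ⊆ {x | ⟪c, x⟫ = 0} := by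
  rintro x ⟨hab, hbc⟩
  rw [mem_disagreementSet] at hab hbc
  have hx : s * ⟪a, x⟫ + t * ⟪c, x⟫ = r * ⟪b, x⟫ := by
    simp only [← real_inner_smul_left, ← inner_add_left, h]
  by_cases hb : 0 < ⟪b, x⟫
  · have ha : ⟪a, x⟫ ≤ 0 := not_lt.mp fun ha => hab (iff_of_true ha hb)
    have hc : ⟪c, x⟫ ≤ 0 := not_lt.mp fun hc => hbc (iff_of_true hb hc)
    show ⟪c, x⟫ = 0
    nlinarith [mul_nonneg hr hb.le, mul_nonpos_of_nonneg_of_nonpos hs ha]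
  · have ha : 0 < ⟪a, x⟫ := by_contra fun ha => hab (iff_of_false ha hb)
    have hc : 0 < ⟪c, x⟫ := by_contra fun hc => hbc (iff_of_false hb hc)
    nlinarith [mul_nonpos_of_nonneg_of_nonpos hr (not_lt.mp hb), mul_nonneg hs ha.le]

lemma exists_linearIsometryEquiv_apply_eq {a a' : E} (h : ‖a‖ = ‖a'‖) :
    ∃ T : E ≃ₗᵢ[ℝ] E, T a = a' :=
  ⟨(ℝ ∙ (a - a'))ᗮ.reflection, Submodule.reflection_sub h⟩

lemma exists_linearIsometryEquiv_apply_eq_apply_eq {a b a' b' : E} (ha : ‖a‖ = ‖a'‖)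
    (hb : ‖b‖ = ‖b'‖) (hab : ⟪a, b⟫ = ⟪a', b'⟫) :
    ∃ T : E ≃ₗᵢ[ℝ] E, T a = a' ∧ T b = b' := by
  obtain ⟨R, hRa⟩ := exists_linearIsometryEquiv_apply_eq ha
  have hRb : ‖R b‖ = ‖b'‖ := by rw [R.norm_map, hb]
  refine ⟨R.trans (ℝ ∙ (R b - b'))ᗮ.reflection, ?_, Submodule.reflection_sub hRb⟩
  have hperp : a' ∈ (ℝ ∙ (R b - b'))ᗮ := by
    rw [Submodule.mem_orthogonal_singleton_iff_inner_right, inner_sub_left, ← hRa,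
      R.inner_map_map, real_inner_comm, hab, hRa, real_inner_comm, sub_self]
  simp [hRa, Submodule.reflection_mem_subspace_eq_self hperp]

noncomputable def angleVec (e : Fin 2 → E) (θ : ℝ) : E := cos θ • e 0 + sin θ • e 1

lemma angleVec_pi (e : Fin 2 → E) : angleVec e π = -angleVec e 0 := by simp [angleVec]

lemma sin_smul_angleVec_add (e : Fin 2 → E) (α β : ℝ) :
    sin β • angleVec e 0 + sin α • angleVec e (α + β) =
      sin (α + β) • angleVec e α := by
  simp only [angleVec, sin_add, cos_add, cos_zero, sin_zero]
  match_scalars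
  · linear_combination -sin β * sin_sq_add_cos_sq α
  · ring

lemma inner_angleVec (he : Orthonormal ℝ e) (α β : ℝ) :
    ⟪angleVec e α, angleVec e β⟫ = cos (β - α) := by
  have h := orthonormal_iff_ite.mp he
  simp only [angleVec, inner_add_left, inner_add_right, real_inner_smul_left,
    real_inner_smul_right, h, cos_sub]
  simp

lemma norm_angleVec (he : Orthonormal ℝ e) (θ : ℝ) : ‖angleVec e θ‖ = 1 := by
  have h := inner_angleVec he θ θ
  rwa [sub_self, cos_zero, real_inner_self_eq_norm_sq,
    pow_eq_one_iff_of_nonneg (norm_nonneg _) two_ne_zero] at h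

lemma angleVec_ne_zero (he : Orthonormal ℝ e) (θ : ℝ) : angleVec e θ ≠ 0 :=
  norm_ne_zero_iff.mp (by rw [norm_angleVec he]; exact one_ne_zero)

lemma angle_angleVec (he : Orthonormal ℝ e) {α β : ℝ} (hαβ : α ≤ β) (hβ : β ≤ α + π) :
    angle (angleVec e α) (angleVec e β) = β - α := by
  rw [angle, inner_angleVec he, norm_angleVec he, norm_angleVec he,
    mul_one, div_one, arccos_cos (by linarith) (by linarith)]

section

variable [MeasurableSpace E] [BorelSpace E] {μ : Measure E}

lemma measurableSet_disagreementSet (a b : E) : MeasurableSet (disagreementSet a b) :=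
  (measurableSet_eq_fun (measurable_sgn.comp (by fun_prop))
    (measurable_sgn.comp (by fun_prop))).compl

lemma measurableSet_inner_eq_zero (a : E) : MeasurableSet {x | ⟪a, x⟫ = 0} :=
  measurableSet_eq_fun (by fun_prop) measurable_const

lemma measure_preimage_linearIsometryEquiv (hrot : ∀ T : E ≃ₗᵢ[ℝ] E, μ.map T = μ)
    (T : E ≃ₗᵢ[ℝ] E) {s : Set E} (hs : MeasurableSet s) : μ (T ⁻¹' s) = μ s :=
  (MeasurePreserving.mk T.continuous.measurable (hrot T)).measure_preimage hs.nullMeasurableSet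

lemma measure_inner_eq_zero_congr (hrot : ∀ T : E ≃ₗᵢ[ℝ] E, μ.map T = μ) {a b : E}
    (ha : a ≠ 0) (hb : b ≠ 0) : μ {x | ⟪a, x⟫ = 0} = μ {x | ⟪b, x⟫ = 0} := by
  obtain ⟨T, hT⟩ := exists_linearIsometryEquiv_apply_eq (a := ‖b‖ • a) (a' := ‖a‖ • b)
    (by simp only [norm_smul, norm_norm, mul_comm])
  have hpre : T ⁻¹' {x | ⟪b, x⟫ = 0} = {x | ⟪a, x⟫ = 0} := by
    ext x
    have hscale : ‖a‖ * ⟪b, T x⟫ = ‖b‖ * ⟪a, x⟫ := by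
      rw [← real_inner_smul_left, ← hT, T.inner_map_map, real_inner_smul_left]
    simp only [Set.mem_preimage, Set.mem_ofPred_eq]
    rw [← mul_right_inj' (norm_ne_zero_iff.mpr ha), hscale, mul_zero, mul_eq_zero,
      or_iff_right (norm_ne_zero_iff.mpr hb)]
  rw [← hpre, measure_preimage_linearIsometryEquiv hrot T (measurableSet_inner_eq_zero b)]

/-- Fubini against Lebesgue measure `ν`: `∫ μ(b⊥) dν(b) = ∫ ν(x⊥) dμ(x) = 0`, and the integrand
on the left is the constant `μ(a⊥)` off `b = 0`. -/
lemma measure_inner_eq_zero [FiniteDimensional ℝ E] [SFinite μ] (h0 : μ {0} = 0)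
    (hrot : ∀ T : E ≃ₗᵢ[ℝ] E, μ.map T = μ) {a : E} (ha : a ≠ 0) :
    μ {x | ⟪a, x⟫ = 0} = 0 := by
  have : Nontrivial E := ⟨⟨a, 0, ha⟩⟩
  let ν : Measure E := Measure.addHaar
  have hS : MeasurableSet {p : E × E | ⟪p.1, p.2⟫ = 0} :=
    measurableSet_eq_fun (by fun_prop) measurable_const
  have hν : ∀ x : E, x ≠ 0 → ν {b | ⟪b, x⟫ = 0} = 0 := fun x hx => by
    have : (ℝ ∙ x)ᗮ ≠ ⊤ := by simpa [Submodule.orthogonal_eq_top_iff] using hx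
    have hset : {b | ⟪b, x⟫ = 0} = ((ℝ ∙ x)ᗮ : Set E) := by
      ext b; simp [Submodule.mem_orthogonal_singleton_iff_inner_left]
    rw [hset, Measure.addHaar_submodule ν _ this]
  have hleft : ∫⁻ b, μ {x | ⟪b, x⟫ = 0} ∂ν = μ {x | ⟪a, x⟫ = 0} * ν Set.univ := by
    rw [← lintegral_const]
    refine lintegral_congr_ae ?_
    filter_upwards [measure_eq_zero_iff_ae_notMem.mp (measure_singleton (μ := ν) 0)] with b hb
    exact measure_inner_eq_zero_congr hrot hb ha
  have hright : ∫⁻ x, ν {b | ⟪b, x⟫ = 0} ∂μ = 0 := by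
    rw [lintegral_congr_ae (g := 0)]
    · simp
    filter_upwards [measure_eq_zero_iff_ae_notMem.mp h0] with x hx
    exact hν x hx
  have hprod : ∫⁻ b, μ {x | ⟪b, x⟫ = 0} ∂ν = ∫⁻ x, ν {b | ⟪b, x⟫ = 0} ∂μ :=
    (Measure.prod_apply hS).symm.trans (Measure.prod_apply_symm hS)
  rw [hright, hleft, mul_eq_zero] at hprod
  exact hprod.resolve_right (Measure.measure_univ_ne_zero.mpr (NeZero.ne ν))

lemma measure_disagreementSet_congr (hrot : ∀ T : E ≃ₗᵢ[ℝ] E, μ.map T = μ) {a b a' b' : E}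
    (ha : a ≠ 0) (hb : b ≠ 0) (ha' : a' ≠ 0) (hb' : b' ≠ 0)
    (h : angle a b = angle a' b') :
    μ (disagreementSet a b) = μ (disagreementSet a' b') := by
  have hnorm : ∀ {x : E}, x ≠ 0 → ‖‖x‖⁻¹ • x‖ = 1 := fun hx => by
    rw [norm_smul, norm_inv, norm_norm, inv_mul_cancel₀ (norm_ne_zero_iff.mpr hx)]
  have hinner : ∀ x y : E,
      ⟪‖x‖⁻¹ • x, ‖y‖⁻¹ • y⟫ = cos (angle x y) := fun x y => by
    rw [cos_angle, real_inner_smul_left, real_inner_smul_right]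
    ring
  have hscale : ∀ {x y : E}, x ≠ 0 → y ≠ 0 →
      disagreementSet x y = disagreementSet (‖x‖⁻¹ • x) (‖y‖⁻¹ • y) := fun hx hy =>
    (disagreementSet_smul (inv_pos.mpr (norm_pos_iff.mpr hx))
      (inv_pos.mpr (norm_pos_iff.mpr hy))).symm
  obtain ⟨T, hTa, hTb⟩ := exists_linearIsometryEquiv_apply_eq_apply_eq
    ((hnorm ha).trans (hnorm ha').symm) ((hnorm hb).trans (hnorm hb').symm)
    (by rw [hinner, hinner, h])
  rw [hscale ha hb, hscale ha' hb', ← hTa, ← hTb, ← preimage_disagreementSet T,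
    measure_preimage_linearIsometryEquiv hrot T (measurableSet_disagreementSet _ _)]

variable [FiniteDimensional ℝ E] [SFinite μ] (h0 : μ {0} = 0)
  (hrot : ∀ T : E ≃ₗᵢ[ℝ] E, μ.map T = μ) (he : Orthonormal ℝ e)
include h0 hrot he

lemma measure_disagreementSet_angleVec_add {α β : ℝ} (hα : 0 ≤ α) (hβ : 0 ≤ β)
    (hαβ : α + β ≤ π) :
    μ (disagreementSet (angleVec e 0) (angleVec e (α + β))) =
      μ (disagreementSet (angleVec e 0) (angleVec e α)) +
        μ (disagreementSet (angleVec e 0) (angleVec e β)) := by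
  rcases hα.eq_or_lt with rfl | hα
  · simp
  rcases hβ.eq_or_lt with rfl | hβ
  · simp
  have hoverlap : μ (disagreementSet (angleVec e 0) (angleVec e α) ∩
      disagreementSet (angleVec e α) (angleVec e (α + β))) = 0 :=
    measure_mono_null
      (disagreementSet_inter_subset (sin_nonneg_of_nonneg_of_le_pi (by linarith) hαβ)
        (sin_nonneg_of_nonneg_of_le_pi hβ.le (by linarith))
        (sin_pos_of_pos_of_lt_pi hα (by linarith)) (sin_smul_angleVec_add e α β))
      (measure_inner_eq_zero h0 hrot (angleVec_ne_zero he _))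
  have hshift : μ (disagreementSet (angleVec e α) (angleVec e (α + β))) =
      μ (disagreementSet (angleVec e 0) (angleVec e β)) :=
    measure_disagreementSet_congr hrot (angleVec_ne_zero he _) (angleVec_ne_zero he _)
      (angleVec_ne_zero he _) (angleVec_ne_zero he _)
      (by rw [angle_angleVec he (by linarith) (by linarith),
        angle_angleVec he hβ.le (by linarith)]; ring)
  rw [disagreementSet_eq_symmDiff _ (angleVec e α),
    measure_symmDiff_eq_add_of_inter_null (measurableSet_disagreementSet _ _) hoverlap, hshift]

lemma measure_disagreementSet_angleVec [IsProbabilityMeasure μ] {θ : ℝ} (hθ0 : 0 ≤ θ)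
    (hθπ : θ ≤ π) :
    μ (disagreementSet (angleVec e 0) (angleVec e θ)) = ENNReal.ofReal (θ / π) := by
  let g : ℝ → ℝ := fun t => (μ (disagreementSet (angleVec e 0) (angleVec e t))).toReal
  have hg := apply_eq_div_mul_of_add_of_nonneg (g := g) pi_pos
    (fun _ => ENNReal.toReal_nonneg)
    (fun a b ha hb hab => by
      simp only [g, measure_disagreementSet_angleVec_add h0 hrot he ha hb hab,
        ENNReal.toReal_add (measure_ne_top _ _) (measure_ne_top _ _)]) hθ0 hθπ
  have hgπ : g π = 1 := by
    simp only [g, angleVec_pi, disagreementSet_neg,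
      prob_compl_eq_one_sub (measurableSet_inner_eq_zero _),
      measure_inner_eq_zero h0 hrot (angleVec_ne_zero he 0), tsub_zero, ENNReal.toReal_one]
  rw [← ENNReal.ofReal_toReal (measure_ne_top μ _)]
  exact congrArg ENNReal.ofReal (hg.trans (by rw [hgπ, mul_one]))

end

end

/-- **The disagreement probability of two halfspaces under the uniform distribution on the
unit sphere equals their angle over `π`.**

Let `d ≥ 2`, let `u, v ∈ ℝ^d` be nonzero with angle `φ = arccos(u·v/(‖u‖‖v‖)) ∈ [0, π]`, and
let `μ` be the uniform distribution on the unit sphere in `ℝ^d` (the rotation-invariant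
probability measure supported on `{x : ‖x‖ = 1}`).  Then
`Pr_{x∼μ}[sign(u·x) ≠ sign(v·x)] = φ/π`. -/
theorem disagreement_probability_eq_angle_div_pi
    (d : ℕ) (hd : 2 ≤ d)
    (μ : Measure (EuclideanSpace ℝ (Fin d))) [IsProbabilityMeasure μ]
    (hsupp : μ {x | ‖x‖ = 1}ᶜ = 0)
    (hrot : ∀ T : EuclideanSpace ℝ (Fin d) ≃ₗᵢ[ℝ] EuclideanSpace ℝ (Fin d),
      μ.map T = μ)
    (u v : EuclideanSpace ℝ (Fin d)) (hu : u ≠ 0) (hv : v ≠ 0) :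
    μ {x | sgn ⟪u, x⟫ ≠ sgn ⟪v, x⟫}
      = ENNReal.ofReal (Real.arccos (⟪u, v⟫ / (‖u‖ * ‖v‖)) / Real.pi) := by
  have h0 : μ {0} = 0 := measure_mono_null (fun x hx => by simp_all) hsupp
  have he : Orthonormal ℝ (EuclideanSpace.basisFun (Fin d) ℝ ∘ Fin.castLE hd) :=
    (EuclideanSpace.basisFun (Fin d) ℝ).orthonormal.comp _ (Fin.castLE_injective hd)
  have hφ0 := angle_nonneg u v
  have hφπ := angle_le_pi u v
  change μ (disagreementSet u v) = ENNReal.ofReal (angle u v / π)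
  rw [measure_disagreementSet_congr hrot hu hv (angleVec_ne_zero he 0) (angleVec_ne_zero he _)
    (by rw [angle_angleVec he hφ0 (by linarith), sub_zero]),
    measure_disagreementSet_angleVec h0 hrot he hφ0 hφπ]
end

section
/- Let d ≥ 1, R > 0, let v ∈ ℝ^d be a unit vector, let x be distributed uniformly on the sphere of radius R in ℝ^d, and let γ ∈ (0,1]. Then E[log(1 + e^{−|v·x|})] ≤ 2γ + e^{−γR/√d}. -/
open MeasureTheory ProbabilityTheory Real Set RealInnerProductSpace
open scoped ENNReal NNReal

/-!
The loss is at most `1` on the slab `|⟪v, x⟫| < a` and at most `e^{-a}` off it, so with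
`a = γR/√d` it suffices that this slab has `μ`-mass at most `2γ`.

By rotation invariance the mass `p` of a slab `|⟪u, x⟫| < a` does not depend on the unit vector
`u`. Average over a standard Gaussian `y`: when `‖y‖ ≤ 2√d`, the slab `|⟪y, x⟫| ≤ 2γR` contains
the slab of half-width `a` in the direction `y / ‖y‖`, hence
`p · P(‖y‖ ≤ 2√d) ≤ P(|⟪y, x⟫| ≤ 2γR)` for `(y, x)` distributed as the product measure. By
Fubini the right side is, for each fixed `x` on the sphere, the probability that an `N(0, R²)`
variable lies in `[-2γR, 2γR]`, which is at most `4γ/√(2π)`. Markov's inequality applied to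
`E‖y‖⁴ ≤ 3d²` gives `P(‖y‖ ≤ 2√d) ≥ 13/16`, and `4/√(2π) ≤ 2 · 13/16`.
-/

theorem log_one_add_exp_neg_le_exp_neg (s : ℝ) : log (1 + exp (-s)) ≤ exp (-s) := by
  linarith [log_le_sub_one_of_pos (by positivity : 0 < 1 + exp (-s))]

theorem log_one_add_exp_neg_abs_le_indicator_add (t a : ℝ) :
    log (1 + exp (-|t|)) ≤ {s : ℝ | |s| < a}.indicator 1 t + exp (-a) := by
  by_cases ht : |t| < a
  · rw [indicator_of_mem (show t ∈ {s : ℝ | |s| < a} from ht), Pi.one_apply]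
    linarith [log_one_add_exp_neg_le_exp_neg |t|, exp_pos (-a),
      exp_le_one_iff.mpr (neg_nonpos.mpr (abs_nonneg t))]
  · rw [indicator_of_notMem (show t ∉ {s : ℝ | |s| < a} from ht), zero_add]
    exact (log_one_add_exp_neg_le_exp_neg |t|).trans (exp_le_exp.mpr (by linarith))

theorem integral_log_one_add_exp_neg_abs_le {Ω : Type*} [MeasurableSpace Ω] {μ : Measure Ω}
    [IsProbabilityMeasure μ] {X : Ω → ℝ} (hX : Measurable X) (a : ℝ) :
    ∫ ω, log (1 + exp (-|X ω|)) ∂μ ≤ μ.real {ω | |X ω| < a} + exp (-a) := by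
  have hA : MeasurableSet {ω | |X ω| < a} := measurableSet_lt hX.abs measurable_const
  have hint : Integrable (fun ω => log (1 + exp (-|X ω|))) μ := by
    refine Integrable.mono' (integrable_const 1)
      (measurable_log.comp (by fun_prop)).aestronglyMeasurable (ae_of_all _ fun ω => ?_)
    rw [norm_of_nonneg (log_nonneg (by linarith [exp_pos (-|X ω|)]))]
    exact (log_one_add_exp_neg_le_exp_neg _).trans
      (exp_le_one_iff.mpr (neg_nonpos.mpr (abs_nonneg _)))
  calc ∫ ω, log (1 + exp (-|X ω|)) ∂μ
      ≤ ∫ ω, ({ω | |X ω| < a}.indicator 1 ω + exp (-a)) ∂μ := by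
        refine integral_mono hint (((integrable_const 1).indicator hA).add (integrable_const _))
          fun ω => ?_
        simpa [indicator] using log_one_add_exp_neg_abs_le_indicator_add (X ω) a
    _ = μ.real {ω | |X ω| < a} + exp (-a) := by
        rw [integral_add ((integrable_const 1).indicator hA) (integrable_const _),
          integral_indicator_one hA, integral_const, probReal_univ, one_smul]

theorem gaussianReal_le_mul_volume (m : ℝ) {v : ℝ≥0} (hv : v ≠ 0) (s : Set ℝ) :
    gaussianReal m v s ≤ ENNReal.ofReal (√(2 * π * v))⁻¹ * volume s := by
  rw [gaussianReal_apply m hv, ← setLIntegral_const]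
  refine lintegral_mono fun x => ENNReal.ofReal_le_ofReal ?_
  rw [gaussianPDFReal_def]
  exact mul_le_of_le_one_right (by positivity) (exp_le_one_iff.mpr (by
    have : 0 ≤ (x - m) ^ 2 / (2 * v) := by positivity
    linarith [neg_div (2 * (v : ℝ)) ((x - m) ^ 2)]))

theorem integral_pow_four_mul_exp_neg_sq_div_two :
    ∫ t, t ^ 4 * exp (-t ^ 2 / 2) = 3 * √(2 * π) := by
  have heven : (fun t : ℝ => t ^ 4 * exp (-t ^ 2 / 2)) =
      fun t => (fun s : ℝ => s ^ 4 * exp (-s ^ 2 / 2)) |t| := by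
    funext t
    dsimp only
    rw [(by decide : Even 4).pow_abs, sq_abs]
  rw [heven, integral_comp_abs (f := fun s : ℝ => s ^ 4 * exp (-s ^ 2 / 2))]
  have hrpow : ∫ s in Ioi (0 : ℝ), s ^ 4 * exp (-s ^ 2 / 2)
      = ∫ s in Ioi (0 : ℝ), s ^ (4 : ℝ) * exp (-(1 / 2) * s ^ (2 : ℝ)) := by
    refine setIntegral_congr_fun measurableSet_Ioi fun s _ => ?_
    rw [rpow_ofNat, rpow_ofNat]
    ring_nf
  rw [hrpow, integral_rpow_mul_exp_neg_mul_rpow (by norm_num) (by norm_num) (by norm_num),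
    show ((4 : ℝ) + 1) / 2 = 1 / 2 + 1 + 1 by norm_num, Gamma_add_one (by norm_num),
    Gamma_add_one (by norm_num), Gamma_one_half_eq,
    show -((4 : ℝ) + 1) / 2 = -2 + -(1 / 2) by norm_num,
    rpow_add (by norm_num), rpow_neg (by norm_num), rpow_neg (by norm_num), rpow_two,
    ← sqrt_eq_rpow, sqrt_mul (by norm_num) π]
  field_simp
  rw [mul_right_comm, ← sqrt_mul (by norm_num)]
  norm_num

theorem integral_pow_four_gaussianReal : ∫ t, t ^ 4 ∂gaussianReal 0 1 = 3 := by
  rw [integral_gaussianReal_eq_integral_smul one_ne_zero, gaussianPDFReal_def]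
  simp only [NNReal.coe_one, mul_one, sub_zero, smul_eq_mul, mul_assoc, integral_const_mul]
  simp_rw [mul_comm (rexp _) (_ ^ 4)]
  rw [integral_pow_four_mul_exp_neg_sq_div_two]
  field_simp

theorem integral_norm_pow_four_stdGaussian_le {ι : Type*} [Fintype ι] :
    ∫ y, ‖y‖ ^ 4 ∂stdGaussian (EuclideanSpace ℝ ι) ≤ 3 * Fintype.card ι ^ 2 := by
  have h4 : Integrable (fun t : ℝ => t ^ 4) (gaussianReal 0 1) := by
    simpa [(by decide : Even 4).pow_abs] using
      (memLp_id_gaussianReal (μ := 0) (v := 1) 4).integrable_norm_pow four_ne_zero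
  have hint : ∀ i : ι,
      Integrable (fun x : ι → ℝ => x i ^ 4) (Measure.pi fun _ => gaussianReal 0 1) :=
    fun i => integrable_comp_eval (μ := fun _ => gaussianReal 0 1) (f := fun t : ℝ => t ^ 4) h4
  rw [← map_pi_eq_stdGaussian, integral_map (by fun_prop) (by fun_prop)]
  calc ∫ x : ι → ℝ, ‖WithLp.toLp 2 x‖ ^ 4 ∂(Measure.pi fun _ => gaussianReal 0 1)
      ≤ ∫ x : ι → ℝ, Fintype.card ι * ∑ i, x i ^ 4 ∂(Measure.pi fun _ => gaussianReal 0 1) := by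
        refine integral_mono_of_nonneg (ae_of_all _ fun x => by positivity)
          ((integrable_finsetSum _ fun i _ => hint i).const_mul _) (ae_of_all _ fun x => ?_)
        calc ‖WithLp.toLp 2 x‖ ^ 4 = (‖WithLp.toLp 2 x‖ ^ 2) ^ 2 := by ring
          _ = (∑ i, x i ^ 2) ^ 2 := by rw [EuclideanSpace.real_norm_sq_eq]
          _ ≤ Fintype.card ι * ∑ i, (x i ^ 2) ^ 2 := sq_sum_le_card_mul_sum_sq
          _ = Fintype.card ι * ∑ i, x i ^ 4 := by simp only [← pow_mul]
    _ = 3 * Fintype.card ι ^ 2 := by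
        rw [integral_const_mul, integral_finsetSum _ fun i _ => hint i]
        simp only [integral_comp_eval (μ := fun _ : ι => gaussianReal 0 1)
            (f := fun t : ℝ => t ^ 4) (by fun_prop), integral_pow_four_gaussianReal,
          Finset.sum_const, Finset.card_univ, nsmul_eq_mul]
        ring

theorem le_stdGaussian_real_norm_le_two_mul_sqrt_card {ι : Type*} [Fintype ι] [Nonempty ι] :
    13 / 16 ≤ (stdGaussian (EuclideanSpace ℝ ι)).real {y | ‖y‖ ≤ 2 * √(Fintype.card ι)} := by
  set d : ℝ := (Fintype.card ι : ℝ)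
  have hd : 0 < d := by positivity
  have hmarkov := mul_meas_ge_le_integral_of_nonneg (μ := stdGaussian (EuclideanSpace ℝ ι))
    (ae_of_all _ fun y => by positivity)
    ((IsGaussian.memLp_id _ 4 (by norm_num)).integrable_norm_pow four_ne_zero) (16 * d ^ 2)
  have htail : (stdGaussian (EuclideanSpace ℝ ι)).real {y | ‖y‖ ≤ 2 * √d}ᶜ
      ≤ (stdGaussian (EuclideanSpace ℝ ι)).real {y | 16 * d ^ 2 ≤ ‖y‖ ^ 4} := by
    refine measureReal_mono fun y hy => ?_
    have hy' : 2 * √d < ‖y‖ := not_le.mp hy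
    calc 16 * d ^ 2 = (2 * √d) ^ 4 := by
          rw [mul_pow, show √d ^ 4 = (√d ^ 2) ^ 2 by ring, sq_sqrt hd.le]
          norm_num
      _ ≤ ‖y‖ ^ 4 := pow_le_pow_left₀ (by positivity) hy'.le 4
  rw [probReal_compl_eq_one_sub (measurableSet_le (by fun_prop) (by fun_prop))] at htail
  simp only [id] at hmarkov
  have hmoment : 16 * d ^ 2 * (stdGaussian (EuclideanSpace ℝ ι)).real {y | 16 * d ^ 2 ≤ ‖y‖ ^ 4}
      ≤ 3 * d ^ 2 := hmarkov.trans integral_norm_pow_four_stdGaussian_le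
  have hd2 : 0 < 16 * d ^ 2 := by positivity
  have h := (mul_le_mul_of_nonneg_left htail hd2.le).trans hmoment
  refine le_of_mul_le_mul_left ?_ hd2
  linarith

section RotationInvariant

variable {E : Type*} [NormedAddCommGroup E] [InnerProductSpace ℝ E] [MeasurableSpace E]
  [BorelSpace E] {μ : Measure E}

theorem measure_abs_inner_lt_eq_of_norm_eq (hrot : ∀ T : E ≃ₗᵢ[ℝ] E, μ.map T = μ) {u w : E}
    (h : ‖u‖ = ‖w‖) (a : ℝ) : μ {x | |⟪u, x⟫| < a} = μ {x | |⟪w, x⟫| < a} := by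
  obtain ⟨T, rfl⟩ : ∃ T : E ≃ₗᵢ[ℝ] E, T u = w := ⟨_, Submodule.reflection_sub h⟩
  have hT : MeasurePreserving T μ μ := ⟨T.continuous.measurable, hrot T⟩
  conv_rhs =>
    rw [← hT.measure_preimage (measurableSet_lt (by fun_prop) measurable_const).nullMeasurableSet]
  simp only [preimage_ofPred_eq, LinearIsometryEquiv.inner_map_map]

theorem measure_abs_inner_lt_le_measure_abs_inner_le (hrot : ∀ T : E ≃ₗᵢ[ℝ] E, μ.map T = μ)
    {u : E} (hu : ‖u‖ = 1) (y : E) (a : ℝ) :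
    μ {x | |⟪u, x⟫| < a} ≤ μ {x | |⟪y, x⟫| ≤ ‖y‖ * a} := by
  rcases eq_or_ne y 0 with rfl | hy
  · simpa using measure_mono (subset_univ _)
  have hnorm : ‖u‖ = ‖‖y‖⁻¹ • y‖ := by
    rw [hu, norm_smul, norm_inv, norm_norm, inv_mul_cancel₀ (norm_ne_zero_iff.mpr hy)]
  rw [measure_abs_inner_lt_eq_of_norm_eq hrot hnorm]
  refine measure_mono fun x hx => ?_
  have hx : |⟪‖y‖⁻¹ • y, x⟫| < a := hx
  rw [real_inner_smul_left, abs_mul, abs_inv, abs_norm,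
    inv_mul_lt_iff₀ (norm_pos_iff.mpr hy)] at hx
  exact hx.le

variable [FiniteDimensional ℝ E]

theorem stdGaussian_map_inner (x : E) :
    (stdGaussian E).map (fun y => ⟪y, x⟫) = gaussianReal 0 (‖x‖ ^ 2).toNNReal := by
  have h := IsGaussian.map_eq_gaussianReal (μ := stdGaussian E) (innerSL ℝ x)
  rw [integral_strongDual_stdGaussian, variance_dual_stdGaussian, innerSL_apply_norm] at h
  convert h using 2
  ext y
  rw [innerSL_apply_apply, real_inner_comm]

theorem stdGaussian_abs_inner_le_le {x : E} (hx : x ≠ 0) (b : ℝ) :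
    stdGaussian E {y | |⟪y, x⟫| ≤ b} ≤ ENNReal.ofReal (2 * b / (‖x‖ * √(2 * π))) := by
  have hv : (‖x‖ ^ 2).toNNReal ≠ 0 := by positivity
  have hset : {y : E | |⟪y, x⟫| ≤ b} = (fun y => ⟪y, x⟫) ⁻¹' Icc (-b) b := by
    ext y; simp [abs_le]
  rw [hset, ← Measure.map_apply (by fun_prop) measurableSet_Icc, stdGaussian_map_inner]
  refine (gaussianReal_le_mul_volume 0 hv _).trans_eq ?_
  rw [Real.volume_Icc, ← ENNReal.ofReal_mul (by positivity), Real.coe_toNNReal _ (by positivity),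
    sqrt_mul (by positivity), sqrt_sq (norm_nonneg x)]
  congr 1
  field_simp
  ring

theorem measure_abs_inner_lt_mul_stdGaussian_le [IsProbabilityMeasure μ] {R : ℝ} (hR : 0 < R)
    (hsupp : ∀ᵐ x ∂μ, ‖x‖ = R) (hrot : ∀ T : E ≃ₗᵢ[ℝ] E, μ.map T = μ) {u : E} (hu : ‖u‖ = 1)
    {a : ℝ} (ha : 0 ≤ a) (c : ℝ) :
    μ {x | |⟪u, x⟫| < a} * stdGaussian E {y | ‖y‖ ≤ c}
      ≤ ENNReal.ofReal (2 * (c * a) / (R * √(2 * π))) := by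
  set S : Set (E × E) := {p | |⟪p.1, p.2⟫| ≤ c * a}
  have hS : MeasurableSet S := measurableSet_le (by fun_prop) measurable_const
  calc μ {x | |⟪u, x⟫| < a} * stdGaussian E {y | ‖y‖ ≤ c}
      = ∫⁻ _ in {y | ‖y‖ ≤ c}, μ {x | |⟪u, x⟫| < a} ∂stdGaussian E := (setLIntegral_const _ _).symm
    _ ≤ ∫⁻ y in {y | ‖y‖ ≤ c}, μ (Prod.mk y ⁻¹' S) ∂stdGaussian E := by
        refine setLIntegral_mono (measurable_measure_prodMk_left hS) fun y hy => ?_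
        refine (measure_abs_inner_lt_le_measure_abs_inner_le hrot hu y a).trans (measure_mono ?_)
        exact fun x hx => le_trans hx (mul_le_mul_of_nonneg_right hy ha)
    _ ≤ ∫⁻ y, μ (Prod.mk y ⁻¹' S) ∂stdGaussian E := setLIntegral_le_lintegral _ _
    _ = ∫⁻ x, stdGaussian E ((·, x) ⁻¹' S) ∂μ := by
        rw [← Measure.prod_apply hS, Measure.prod_apply_symm hS]
    _ ≤ ∫⁻ _, ENNReal.ofReal (2 * (c * a) / (R * √(2 * π))) ∂μ := by
        refine lintegral_mono_ae (hsupp.mono fun x hx => ?_)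
        have := stdGaussian_abs_inner_le_le (norm_pos_iff.mp (hx ▸ hR)) (c * a)
        rwa [hx] at this
    _ = ENNReal.ofReal (2 * (c * a) / (R * √(2 * π))) := by simp

end RotationInvariant

theorem measureReal_abs_inner_lt_div_sqrt_card_le {ι : Type*} [Fintype ι] [Nonempty ι]
    {μ : Measure (EuclideanSpace ℝ ι)} [IsProbabilityMeasure μ] {R : ℝ} (hR : 0 < R)
    (hsupp : ∀ᵐ x ∂μ, ‖x‖ = R)
    (hrot : ∀ T : EuclideanSpace ℝ ι ≃ₗᵢ[ℝ] EuclideanSpace ℝ ι, μ.map T = μ)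
    {u : EuclideanSpace ℝ ι} (hu : ‖u‖ = 1) {γ : ℝ} (hγ : 0 ≤ γ) :
    μ.real {x | |⟪u, x⟫| < γ * R / √(Fintype.card ι)} ≤ 2 * γ := by
  set d : ℝ := (Fintype.card ι : ℝ)
  have hd : 0 < √d := by positivity
  have h := measure_abs_inner_lt_mul_stdGaussian_le hR hsupp hrot hu
    (a := γ * R / √d) (by positivity) (2 * √d)
  rw [show 2 * (2 * √d * (γ * R / √d)) / (R * √(2 * π)) = 4 * γ / √(2 * π) by
    field_simp; ring] at h
  have hreal : μ.real {x | |⟪u, x⟫| < γ * R / √d}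
      * (stdGaussian (EuclideanSpace ℝ ι)).real {y | ‖y‖ ≤ 2 * √d} ≤ 4 * γ / √(2 * π) := by
    rw [measureReal_def, measureReal_def, ← ENNReal.toReal_mul]
    exact ENNReal.toReal_le_of_le_ofReal (by positivity) h
  have hball := mul_le_mul_of_nonneg_left (le_stdGaussian_real_norm_le_two_mul_sqrt_card (ι := ι))
    (measureReal_nonneg (μ := μ) (s := {x | |⟪u, x⟫| < γ * R / √d}))
  have hsqrt : 32 / 13 ≤ √(2 * π) := by
    rw [le_sqrt (by norm_num) (by positivity)]
    nlinarith [pi_gt_d2]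
  have hconst : 4 * γ / √(2 * π) ≤ 2 * γ * (13 / 16) := by
    rw [div_le_iff₀ (by positivity)]
    nlinarith
  linarith

/-- **A margin-based bound on the expected logistic loss of the true classifier.**

Let `d ≥ 1`, `R > 0`, let `v ∈ ℝ^d` be a unit vector, let `μ` be the uniform distribution on
the sphere of radius `R` in `ℝ^d` (the rotation-invariant probability measure supported on
`{x : ‖x‖ = R}`), and let `γ ∈ (0,1]`.  Then
`E_{x∼μ}[log(1 + e^{−|v·x|})] ≤ 2γ + e^{−γR/√d}`. -/
theorem logistic_loss_margin_bound
    (d : ℕ) (hd : 1 ≤ d) (R : ℝ) (hR : 0 < R)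
    (μ : Measure (EuclideanSpace ℝ (Fin d))) [IsProbabilityMeasure μ]
    (hsupp : μ {x | ‖x‖ = R}ᶜ = 0)
    (hrot : ∀ T : EuclideanSpace ℝ (Fin d) ≃ₗᵢ[ℝ] EuclideanSpace ℝ (Fin d),
      μ.map T = μ)
    (v : EuclideanSpace ℝ (Fin d)) (hv : ‖v‖ = 1)
    (γ : ℝ) (hγ : 0 < γ ∧ γ ≤ 1) :
    (∫ x, Real.log (1 + Real.exp (-|⟪v, x⟫|)) ∂μ)
      ≤ 2 * γ + Real.exp (-(γ * R / Real.sqrt d)) := by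
  have : Nonempty (Fin d) := ⟨⟨0, hd⟩⟩
  have hslab := measureReal_abs_inner_lt_div_sqrt_card_le hR (ae_iff.mpr hsupp) hrot hv hγ.1.le
  rw [Fintype.card_fin] at hslab
  calc ∫ x, log (1 + exp (-|⟪v, x⟫|)) ∂μ
      ≤ μ.real {x | |⟪v, x⟫| < γ * R / √d} + exp (-(γ * R / √d)) :=
        integral_log_one_add_exp_neg_abs_le (by fun_prop) _
    _ ≤ 2 * γ + exp (-(γ * R / √d)) := by gcongr
end
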